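/- arXiv:2504.19552 — 2 statements merged into one kernel-verified Lean document; each statement's English description precedes it below -/
import Mathlib

section
/- Let α₀, α₁, α₂ > 0 with 2α₁ + 2α₂ > d - 1, where d ≥ 2 is an integer. For r ≥ 1, define G(r) := ∫₀^∞ s^{d-2} / ((1+r+s)^{2α₁} (1+s)^{2α₂}) ds. Then there is a constant C (independent of r) such that G(r) ≤ C (1+r)^{-2α₀} for all r ≥ 1, where α₀ = α₁ + α₂ - (d-1)/2 if max(α₁,α₂) < (d-1)/2; α₀ is any value strictly less than min(α₁,α₂) if max(α₁,α₂) = (d-1)/2; and α₀ = min(α₁,α₂) if max(α₁,α₂) > (d-1)/2. -/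
/-!
Since `s ≤ 1 + s`, `G(r)` is dominated by `∫₀^∞ (1+s)^p (1+r+s)^(-a) ds` with `p = d-2-2α₂` and
`a = 2α₁`. If `p > -1`, splitting at `s = r` and bounding `1+r+s` below by `1+r`, resp. `1+s`,
gives the rate `(1+r)^(p+1-a)`. In the other regimes part `e` of the decay is transferred to `r`
through `(1+r+s)^(-a) ≤ (1+r)^(-e) (1+s)^(e-a)`, which keeps the `s`-integral finite as long as
`e < a - p - 1`.
-/

open MeasureTheory

/-- The scalar integral `G(r) = ∫₀^∞ s^{d-2} / ((1+r+s)^{2α₁} (1+s)^{2α₂}) ds`. -/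
noncomputable def Gint (d : ℕ) (α₁ α₂ r : ℝ) : ℝ :=
  ∫ s in Set.Ioi (0 : ℝ), s ^ ((d : ℝ) - 2) / ((1 + r + s) ^ (2 * α₁) * (1 + s) ^ (2 * α₂))

open Set Real

lemma integrableOn_Ioi_one_add_rpow {q c : ℝ} (hq : q < -1) (hc : -1 < c) :
    IntegrableOn (fun s : ℝ => (1 + s) ^ q) (Ioi c) := by
  simpa only [add_comm (1 : ℝ)] using integrableOn_add_rpow_Ioi_of_lt hq hc

lemma integral_Ioi_one_add_rpow {q c : ℝ} (hq : q < -1) (hc : -1 < c) :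
    ∫ s in Ioi c, (1 + s) ^ q = -(1 + c) ^ (q + 1) / (q + 1) := by
  have hpre : (fun s : ℝ => 1 + s) ⁻¹' Ioi (1 + c) = Ioi c := by ext; simp
  rw [← hpre, (measurePreserving_add_left volume 1).setIntegral_preimage_emb
    (measurableEmbedding_addLeft 1) (fun x => x ^ q), integral_Ioi_rpow_of_lt hq (by linarith)]

lemma intervalIntegral_one_add_rpow {p : ℝ} (hp : -1 < p) (r : ℝ) :
    ∫ s in (0 : ℝ)..r, (1 + s) ^ p = ((1 + r) ^ (p + 1) - 1) / (p + 1) := by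
  rw [intervalIntegral.integral_comp_add_left (fun x => x ^ p), integral_rpow (Or.inl hp)]
  simp

lemma rpow_neg_le_rpow_neg_mul_rpow {x y z a e : ℝ} (hx : 0 < x) (hy : 0 < y) (hxz : x ≤ z)
    (hyz : y ≤ z) (he : 0 ≤ e) (hea : e ≤ a) : z ^ (-a) ≤ x ^ (-e) * y ^ (e - a) := by
  calc z ^ (-a) = z ^ (-e) * z ^ (e - a) := by
        rw [← rpow_add (hx.trans_le hxz)]; ring_nf
    _ ≤ x ^ (-e) * y ^ (e - a) :=
        mul_le_mul (rpow_le_rpow_of_nonpos hx hxz (by linarith))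
          (rpow_le_rpow_of_nonpos hy hyz (by linarith)) (rpow_nonneg (hx.trans_le hxz).le _)
          (by positivity)

noncomputable def weightIntegral (p a r : ℝ) : ℝ :=
  ∫ s in Ioi (0 : ℝ), (1 + s) ^ p * (1 + r + s) ^ (-a)

section weightIntegral

variable {p a r : ℝ}

lemma one_add_rpow_mul_rpow_neg_le (ha : 0 ≤ a) (hr : 0 ≤ r) {s : ℝ} (hs : 0 ≤ s) :
    (1 + s) ^ p * (1 + r + s) ^ (-a) ≤ (1 + s) ^ (p - a) := by
  rw [rpow_sub (by positivity), div_eq_mul_inv, ← rpow_neg (by positivity)]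
  exact mul_le_mul_of_nonneg_left
    (rpow_le_rpow_of_nonpos (by positivity) (by linarith) (by linarith)) (by positivity)

lemma integrableOn_weight (ha : 0 ≤ a) (hpa : p + 1 < a) (hr : 0 ≤ r) :
    IntegrableOn (fun s => (1 + s) ^ p * (1 + r + s) ^ (-a)) (Ioi 0) := by
  refine (integrableOn_Ioi_one_add_rpow (q := p - a) (by linarith) (by norm_num)).mono'
    (by fun_prop : Measurable _).aestronglyMeasurable ?_
  filter_upwards [ae_restrict_mem measurableSet_Ioi] with s (hs : 0 < s)
  rw [norm_of_nonneg (by positivity)]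
  exact one_add_rpow_mul_rpow_neg_le ha hr hs.le

lemma weightIntegral_le_of_transfer {e : ℝ} (he : 0 ≤ e) (hea : e ≤ a) (hpea : p + e + 1 < a)
    (hr : 0 ≤ r) : weightIntegral p a r ≤ (a - e - (p + 1))⁻¹ * (1 + r) ^ (-e) := by
  have hq : p + e - a < -1 := by linarith
  calc weightIntegral p a r ≤ ∫ s in Ioi (0 : ℝ), (1 + r) ^ (-e) * (1 + s) ^ (p + e - a) := by
        refine integral_mono_of_nonneg ?_
          ((integrableOn_Ioi_one_add_rpow hq (by norm_num)).const_mul _) ?_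
        all_goals filter_upwards [ae_restrict_mem measurableSet_Ioi] with s (hs : 0 < s)
        · positivity
        calc (1 + s) ^ p * (1 + r + s) ^ (-a)
            ≤ (1 + s) ^ p * ((1 + r) ^ (-e) * (1 + s) ^ (e - a)) :=
              mul_le_mul_of_nonneg_left (rpow_neg_le_rpow_neg_mul_rpow (by positivity)
                (by positivity) (by linarith) (by linarith) he hea) (by positivity)
          _ = (1 + r) ^ (-e) * (1 + s) ^ (p + e - a) := by
              rw [mul_left_comm, ← rpow_add (by positivity)]; ring_nf
    _ = (a - e - (p + 1))⁻¹ * (1 + r) ^ (-e) := by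
        rw [integral_const_mul, integral_Ioi_one_add_rpow hq (by norm_num), add_zero, one_rpow,
          mul_comm, neg_div, ← div_neg, one_div]
        congr 2
        ring

lemma setIntegral_Ioc_weight_le (hp : -1 < p) (ha : 0 ≤ a) (hr : 0 ≤ r) :
    ∫ s in Ioc 0 r, (1 + s) ^ p * (1 + r + s) ^ (-a) ≤ (p + 1)⁻¹ * (1 + r) ^ (p + 1 - a) := by
  have hcont : ContinuousOn (fun s : ℝ => (1 + s) ^ p) (Icc 0 r) :=
    (continuousOn_const.add continuousOn_id).rpow_const
      fun s hs => Or.inl (by linarith [hs.1] : (0 : ℝ) < 1 + s).ne'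
  calc ∫ s in Ioc 0 r, (1 + s) ^ p * (1 + r + s) ^ (-a)
      ≤ ∫ s in Ioc 0 r, (1 + r) ^ (-a) * (1 + s) ^ p := by
        refine integral_mono_of_nonneg ?_
          ((hcont.integrableOn_Icc.mono_set Ioc_subset_Icc_self).const_mul _) ?_
        all_goals filter_upwards [ae_restrict_mem measurableSet_Ioc] with s hs
        all_goals have : 0 < s := hs.1
        · positivity
        rw [mul_comm]
        exact mul_le_mul_of_nonneg_right
          (rpow_le_rpow_of_nonpos (by positivity) (by linarith) (by linarith)) (by positivity)
    _ = (1 + r) ^ (-a) * (((1 + r) ^ (p + 1) - 1) / (p + 1)) := by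
        rw [integral_const_mul, ← intervalIntegral.integral_of_le hr,
          intervalIntegral_one_add_rpow hp]
    _ ≤ (1 + r) ^ (-a) * ((1 + r) ^ (p + 1) / (p + 1)) := by
        gcongr <;> linarith
    _ = (p + 1)⁻¹ * (1 + r) ^ (p + 1 - a) := by
        rw [mul_div_assoc', ← rpow_add (by positivity), neg_add_eq_sub, div_eq_inv_mul]

lemma setIntegral_Ioi_weight_le (hpa : p + 1 < a) (ha : 0 ≤ a) (hr : 0 ≤ r) :
    ∫ s in Ioi r, (1 + s) ^ p * (1 + r + s) ^ (-a) ≤ (a - (p + 1))⁻¹ * (1 + r) ^ (p + 1 - a) := by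
  have hq : p - a < -1 := by linarith
  calc ∫ s in Ioi r, (1 + s) ^ p * (1 + r + s) ^ (-a) ≤ ∫ s in Ioi r, (1 + s) ^ (p - a) := by
        refine integral_mono_of_nonneg ?_ (integrableOn_Ioi_one_add_rpow hq (by linarith)) ?_
        all_goals filter_upwards [ae_restrict_mem measurableSet_Ioi] with s (hs : r < s)
        · have : 0 < s := by linarith
          positivity
        exact one_add_rpow_mul_rpow_neg_le ha hr (by linarith)
    _ = (a - (p + 1))⁻¹ * (1 + r) ^ (p + 1 - a) := by
        rw [integral_Ioi_one_add_rpow hq (by linarith), neg_div, ← div_neg, div_eq_inv_mul]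
        congr 2 <;> ring

lemma weightIntegral_le_of_split (hp : -1 < p) (hpa : p + 1 < a) (hr : 0 ≤ r) :
    weightIntegral p a r ≤ ((p + 1)⁻¹ + (a - (p + 1))⁻¹) * (1 + r) ^ (p + 1 - a) := by
  have ha : 0 ≤ a := by linarith
  have hint := integrableOn_weight ha hpa hr
  rw [weightIntegral, ← Ioc_union_Ioi_eq_Ioi hr, setIntegral_union Ioc_disjoint_Ioi_same
    measurableSet_Ioi (hint.mono_set Ioc_subset_Ioi_self) (hint.mono_set (Ioi_subset_Ioi hr)),
    add_mul]
  exact add_le_add (setIntegral_Ioc_weight_le hp ha hr) (setIntegral_Ioi_weight_le hpa ha hr)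

end weightIntegral

lemma setIntegral_rpow_div_le_weightIntegral {b a c r : ℝ} (hb : 0 ≤ b) (hr : 0 ≤ r)
    (hint : IntegrableOn (fun s => (1 + s) ^ (b - c) * (1 + r + s) ^ (-a)) (Ioi 0)) :
    ∫ s in Ioi (0 : ℝ), s ^ b / ((1 + r + s) ^ a * (1 + s) ^ c) ≤ weightIntegral (b - c) a r := by
  refine integral_mono_of_nonneg ?_ hint ?_
  all_goals filter_upwards [ae_restrict_mem measurableSet_Ioi] with s (hs : 0 < s)
  · positivity
  calc s ^ b / ((1 + r + s) ^ a * (1 + s) ^ c)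
      ≤ (1 + s) ^ b / ((1 + r + s) ^ a * (1 + s) ^ c) := by
        gcongr
        linarith
    _ = (1 + s) ^ (b - c) * (1 + r + s) ^ (-a) := by
        rw [rpow_sub (by positivity), rpow_neg (by positivity)]
        field_simp

lemma Gint_le_weightIntegral {d : ℕ} (hd : 2 ≤ d) {α₁ α₂ r : ℝ} (hα₁ : 0 ≤ α₁)
    (hconv : (d : ℝ) - 1 < 2 * α₁ + 2 * α₂) (hr : 0 ≤ r) :
    Gint d α₁ α₂ r ≤ weightIntegral ((d : ℝ) - 2 - 2 * α₂) (2 * α₁) r :=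
  setIntegral_rpow_div_le_weightIntegral (sub_nonneg.2 (by exact_mod_cast hd)) hr
    (integrableOn_weight (by linarith) (by linarith) hr)

lemma Gint_le_of_transfer {d : ℕ} (hd : 2 ≤ d) {α₁ α₂ e r : ℝ} (he : 0 ≤ e) (he₁ : e ≤ 2 * α₁)
    (he₂ : (d : ℝ) - 1 + e < 2 * α₁ + 2 * α₂) (hr : 0 ≤ r) :
    Gint d α₁ α₂ r ≤ (2 * α₁ + 2 * α₂ - ((d : ℝ) - 1) - e)⁻¹ * (1 + r) ^ (-e) := by
  calc Gint d α₁ α₂ r ≤ weightIntegral ((d : ℝ) - 2 - 2 * α₂) (2 * α₁) r :=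
        Gint_le_weightIntegral hd (by linarith) (by linarith) hr
    _ ≤ _ := weightIntegral_le_of_transfer he he₁ (by linarith) hr
    _ = _ := by ring_nf

lemma Gint_le_of_split {d : ℕ} (hd : 2 ≤ d) {α₁ α₂ r : ℝ} (hα₂ : 2 * α₂ < (d : ℝ) - 1)
    (hconv : (d : ℝ) - 1 < 2 * α₁ + 2 * α₂) (hr : 0 ≤ r) :
    Gint d α₁ α₂ r ≤ (((d : ℝ) - 1 - 2 * α₂)⁻¹ + (2 * α₁ + 2 * α₂ - ((d : ℝ) - 1))⁻¹) *
      (1 + r) ^ ((d : ℝ) - 1 - 2 * α₁ - 2 * α₂) := by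
  calc Gint d α₁ α₂ r ≤ weightIntegral ((d : ℝ) - 2 - 2 * α₂) (2 * α₁) r :=
        Gint_le_weightIntegral hd (by linarith) hconv hr
    _ ≤ _ := weightIntegral_le_of_split (by linarith) (by linarith) hr
    _ = _ := by ring_nf

/-- key scalar integral estimate. Let `d ≥ 2`, `α₁, α₂ > 0` with
`2α₁ + 2α₂ > d - 1`. Then `G(r) ≤ C (1+r)^{-2α₀}` for `r ≥ 1` where:
`α₀ = α₁ + α₂ - (d-1)/2` if `max(α₁,α₂) < (d-1)/2`; `α₀` is any positive value
strictly less than `min(α₁,α₂)` if `max(α₁,α₂) = (d-1)/2`; and `α₀ = min(α₁,α₂)`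
if `max(α₁,α₂) > (d-1)/2`. -/
theorem Gint_decay (d : ℕ) (hd : 2 ≤ d) (α₁ α₂ : ℝ) (hα₁ : 0 < α₁) (hα₂ : 0 < α₂)
    (hconv : (d : ℝ) - 1 < 2 * α₁ + 2 * α₂) :
    (max α₁ α₂ < ((d : ℝ) - 1) / 2 →
      ∃ C > 0, ∀ r : ℝ, 1 ≤ r →
        Gint d α₁ α₂ r ≤ C * (1 + r) ^ (-2 * (α₁ + α₂ - ((d : ℝ) - 1) / 2))) ∧
    (max α₁ α₂ = ((d : ℝ) - 1) / 2 →
      ∀ α₀ : ℝ, 0 < α₀ → α₀ < min α₁ α₂ →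
        ∃ C > 0, ∀ r : ℝ, 1 ≤ r →
          Gint d α₁ α₂ r ≤ C * (1 + r) ^ (-2 * α₀)) ∧
    (max α₁ α₂ > ((d : ℝ) - 1) / 2 →
      ∃ C > 0, ∀ r : ℝ, 1 ≤ r →
        Gint d α₁ α₂ r ≤ C * (1 + r) ^ (-2 * min α₁ α₂)) := by
  have hsum : min α₁ α₂ + max α₁ α₂ = α₁ + α₂ := min_add_max α₁ α₂
  have hmin₁ : min α₁ α₂ ≤ α₁ := min_le_left α₁ α₂
  refine ⟨fun hmax => ?_, fun hmax α₀ hα₀ hα₀min => ?_, fun hmax => ?_⟩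
  · have hα₂' : 2 * α₂ < (d : ℝ) - 1 := by linarith [le_max_right α₁ α₂]
    refine ⟨((d : ℝ) - 1 - 2 * α₂)⁻¹ + (2 * α₁ + 2 * α₂ - ((d : ℝ) - 1))⁻¹,
      add_pos (inv_pos.2 (by linarith)) (inv_pos.2 (by linarith)), fun r hr => ?_⟩
    convert Gint_le_of_split hd hα₂' hconv (by linarith : (0 : ℝ) ≤ r) using 3
    ring
  · refine ⟨(2 * α₁ + 2 * α₂ - ((d : ℝ) - 1) - 2 * α₀)⁻¹, inv_pos.2 (by linarith),
      fun r hr => ?_⟩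
    convert Gint_le_of_transfer (α₁ := α₁) (α₂ := α₂) hd (e := 2 * α₀) (by linarith)
      (by linarith) (by linarith) (by linarith : (0 : ℝ) ≤ r) using 3
    ring
  · refine ⟨(2 * α₁ + 2 * α₂ - ((d : ℝ) - 1) - 2 * min α₁ α₂)⁻¹, inv_pos.2 (by linarith),
      fun r hr => ?_⟩
    convert Gint_le_of_transfer (α₁ := α₁) (α₂ := α₂) hd (e := 2 * min α₁ α₂) (by positivity)
      (by linarith) (by linarith) (by linarith : (0 : ℝ) ≤ r) using 3
    ring
end

section
/- Let d ≥ 1 and let p, q, α ∈ (1,∞) satisfy α < p and 1/α ≥ 1/(dp) + 1/q. Let σ₁, σ₂ ≥ 0 satisfy σ₁ + σ₂ = d - 2/p - d/q and σ₁, σ₂ < min(d/2, d/2 - 2/p + 1). Then there exist p₁, q₁, p₂, q₂, α₁, α₂ ∈ (1,∞) such that: 2/p_j + d/q_j = d - 2σ_j for j = 1,2; 1/α_j ≥ 1/(d p_j) + 1/q_j; α_j < p_j; 1/α = 1/(2α₁) + 1/(2α₂); and 1/p = 1/(2p₁) + 1/(2p₂). -/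
/-!
In the reciprocal exponents `u = 1/p`, `v = 1/q`, `w = 1/α`, `xⱼ = 1/pⱼ`, `yⱼ = 1/αⱼ` the scaling
condition determines `qⱼ` from `xⱼ`, and with `x₂ = 2u - x₁`, `y₂ = 2w - y₁` every remaining
requirement is a linear inequality in `(x₁, y₁)`. The system is solved by Fourier–Motzkin
elimination: `x₁` is chosen strictly between finitely many lower and upper bounds, each lower bound
lying below each upper bound by the hypotheses on `σⱼ`, and then `y₁` is chosen in an interval that
is nonempty by that choice of `x₁` together with `1/α ≥ 1/(dp) + 1/q`.
-/

theorem exists_between_of_forall_lt {α ι κ : Type*} [LinearOrder α] [DenselyOrdered α]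
    [Finite ι] [Nonempty ι] [Finite κ] [Nonempty κ] {l : ι → α} {h : κ → α}
    (hlh : ∀ i j, l i < h j) : ∃ x, (∀ i, l i < x) ∧ ∀ j, x < h j := by
  obtain ⟨i₀, hi₀⟩ := Finite.exists_max l
  obtain ⟨j₀, hj₀⟩ := Finite.exists_min h
  obtain ⟨x, hlx, hxh⟩ := exists_between (hlh i₀ j₀)
  exact ⟨x, fun i => (hi₀ i).trans_lt hlx, fun j => hxh.trans_le (hj₀ j)⟩

theorem Set.nonempty_Icc_inter_Ioo {α : Type*} [LinearOrder α] [DenselyOrdered α] {a b l h : α}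
    (hab : a ≤ b) (hah : a < h) (hlb : l < b) (hlh : l < h) : (Icc a b ∩ Ioo l h).Nonempty := by
  rcases lt_or_ge l a with hla | hal
  · exact ⟨a, ⟨le_rfl, hab⟩, hla, hah⟩
  · obtain ⟨y, hly, hyh⟩ := exists_between (lt_min hlb hlh)
    exact ⟨y, ⟨hal.trans hly.le, (hyh.trans_le (min_le_left _ _)).le⟩, hly,
      hyh.trans_le (min_le_right _ _)⟩

section Reciprocals

variable {D u v w σ₁ σ₂ : ℝ}

theorem exists_reciprocal_time_split (hD : 1 ≤ D) (hu : 0 < u) (hu₁ : u < 1) (huw : u < w)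
    (hv : 0 < v) (hadm : u + D * v ≤ D * w) (hσ₁ : 0 ≤ σ₁) (hσ₂ : 0 ≤ σ₂)
    (hsum : σ₁ + σ₂ = D - 2 * u - D * v)
    (hb₁ : σ₁ < D / 2) (hb₁' : σ₁ < D / 2 - 2 * u + 1)
    (hb₂ : σ₂ < D / 2) (hb₂' : σ₂ < D / 2 - 2 * u + 1) :
    ∃ x₁ x₂, x₁ + x₂ = 2 * u ∧ 0 < x₁ ∧ 0 < x₂ ∧ x₁ < 1 ∧ x₂ < 1 ∧
      σ₁ + x₁ < D / 2 ∧ σ₂ + x₂ < D / 2 ∧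
      D - 2 * σ₁ - x₁ + D * x₂ < 2 * D * w ∧ D - 2 * σ₂ - x₂ + D * x₁ < 2 * D * w := by
  have hD₀ : 0 < D := by linarith
  have hE : 0 < D + 1 := by linarith
  -- each entry of `l` and `h` is a conjunct of the conclusion solved for `x₁ = 2u - x₂`
  obtain ⟨x₁, hl, hh⟩ := exists_between_of_forall_lt (l := ![0, 2 * u - 1, 2 * u + σ₂ - D / 2,
      (D - 2 * σ₁ + 2 * D * u - 2 * D * w) / (D + 1)])
    (h := ![2 * u, 1, D / 2 - σ₁, (2 * D * w - D + 2 * σ₂ + 2 * u) / (D + 1)]) (by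
    intro i j
    refine lt_of_mul_lt_mul_left ?_ hE.le
    fin_cases i <;> fin_cases j <;>
      simp only [Fin.isValue, Fin.zero_eta, Fin.mk_one, Fin.reduceFinMk, Matrix.cons_val,
        Matrix.cons_val_zero, Matrix.cons_val_one, mul_div_cancel₀ _ hE.ne'] <;>
      nlinarith [mul_pos hD₀ (sub_pos.2 huw), mul_pos hD₀ hv])
  simp only [Fin.forall_fin_succ, Fin.isValue, Matrix.cons_val_zero, Matrix.cons_val_succ,
    Matrix.cons_val_fin_one, forall_const] at hl hh
  obtain ⟨hx₁, hx₂', hσ₂x, hl₄⟩ := hl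
  obtain ⟨hx₂, hx₁', hσ₁x, hh₄⟩ := hh
  rw [div_lt_iff₀ hE] at hl₄
  rw [lt_div_iff₀ hE] at hh₄
  exact ⟨x₁, 2 * u - x₁, by ring, hx₁, by linarith, hx₁', by linarith, by linarith, by linarith,
    by linarith, by linarith⟩

theorem exists_reciprocal_schatten_split {x₁ x₂ : ℝ} (hD : 0 < D) (huw : u < w) (hw : w < 1)
    (hadm : u + D * v ≤ D * w) (hσ₁ : 0 ≤ σ₁) (hσ₂ : 0 ≤ σ₂)
    (hsum : σ₁ + σ₂ = D - 2 * u - D * v)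
    (hx : x₁ + x₂ = 2 * u) (hx₁ : 0 < x₁) (hx₂ : 0 < x₂) (hx₁' : x₁ < 1) (hx₂' : x₂ < 1)
    (h₁ : D - 2 * σ₁ - x₁ + D * x₂ < 2 * D * w) (h₂ : D - 2 * σ₂ - x₂ + D * x₁ < 2 * D * w) :
    ∃ y₁ y₂, y₁ + y₂ = 2 * w ∧ x₁ < y₁ ∧ x₂ < y₂ ∧ y₁ < 1 ∧ y₂ < 1 ∧
      D - 2 * σ₁ - x₁ ≤ D * y₁ ∧ D - 2 * σ₂ - x₂ ≤ D * y₂ := by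
  have ha₁ : (D - 2 * σ₁ - x₁) / D < 1 := by rw [div_lt_one hD]; linarith
  have ha₂ : (D - 2 * σ₂ - x₂) / D < 1 := by rw [div_lt_one hD]; linarith
  have ha₁x₂ : (D - 2 * σ₁ - x₁) / D < 2 * w - x₂ := by rw [div_lt_iff₀ hD]; linarith
  have ha₂x₁ : (D - 2 * σ₂ - x₂) / D < 2 * w - x₁ := by rw [div_lt_iff₀ hD]; linarith
  have ha : (D - 2 * σ₁ - x₁) / D + (D - 2 * σ₂ - x₂) / D ≤ 2 * w := by
    rw [← add_div, div_le_iff₀ hD]; linarith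
  obtain ⟨y, ⟨ha₁y, hya₂⟩, hxy, hy⟩ := Set.nonempty_Icc_inter_Ioo
    (a := (D - 2 * σ₁ - x₁) / D) (b := 2 * w - (D - 2 * σ₂ - x₂) / D)
    (l := max x₁ (2 * w - 1)) (h := min 1 (2 * w - x₂))
    (by linarith) (lt_min ha₁ ha₁x₂) (max_lt (by linarith) (by linarith))
    (max_lt (lt_min hx₁' (by linarith)) (lt_min (by linarith) (by linarith)))
  rw [max_lt_iff] at hxy
  rw [lt_min_iff] at hy
  rw [div_le_iff₀ hD] at ha₁y
  rw [le_sub_comm, div_le_iff₀ hD] at hya₂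
  exact ⟨y, 2 * w - y, by ring, hxy.1, by linarith, hy.1, by linarith, by linarith, by linarith⟩

end Reciprocals

theorem exists_exponents_of_reciprocals {D σ x y : ℝ} (hD : 0 < D) (hσ : 0 ≤ σ) (hx : 0 < x)
    (hxy : x < y) (hy : y < 1) (hσx : σ + x < D / 2) (hadm : D - 2 * σ - x ≤ D * y) :
    ∃ p q α : ℝ, p⁻¹ = x ∧ α⁻¹ = y ∧ 1 < p ∧ 1 < q ∧ 1 < α ∧
      2 / p + D / q = D - 2 * σ ∧ 1 / (D * p) + 1 / q ≤ 1 / α ∧ α < p := by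
  have hr : 0 < D - 2 * σ - 2 * x := by linarith
  refine ⟨x⁻¹, D / (D - 2 * σ - 2 * x), y⁻¹, inv_inv x, inv_inv y,
    (one_lt_inv₀ hx).2 (hxy.trans hy), (one_lt_div hr).2 (by linarith),
    (one_lt_inv₀ (hx.trans hxy)).2 hy, ?_, ?_, inv_strictAnti₀ hx hxy⟩
  · rw [div_inv_eq_mul, div_div_cancel₀ hD.ne']
    ring
  · have h : 1 / (D * x⁻¹) + 1 / (D / (D - 2 * σ - 2 * x)) = (D - 2 * σ - x) / D := by
      field_simp
      ring
    rw [h, one_div, inv_inv, div_le_iff₀ hD]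
    linarith

/-- exponent-splitting lemma for asymmetric-derivative Strichartz estimates.
Let `d ≥ 1` and `p, q, α ∈ (1,∞)` with `α < p` and `1/α ≥ 1/(dp) + 1/q`. Let
`σ₁, σ₂ ≥ 0` satisfy `σ₁ + σ₂ = d - 2/p - d/q` and `σ₁, σ₂ < min(d/2, d/2 - 2/p + 1)`.
Then there exist `p₁, q₁, p₂, q₂, α₁, α₂ ∈ (1,∞)` with `2/pⱼ + d/qⱼ = d - 2σⱼ`,
`1/αⱼ ≥ 1/(d pⱼ) + 1/qⱼ`, `αⱼ < pⱼ`, `1/α = 1/(2α₁) + 1/(2α₂)` and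
`1/p = 1/(2p₁) + 1/(2p₂)`. -/
theorem exponent_splitting (d : ℕ) (hd : 1 ≤ d) (p q α σ₁ σ₂ : ℝ)
    (hp : 1 < p) (hq : 1 < q) (hα : 1 < α)
    (hαp : α < p) (hadm : 1 / (d * p) + 1 / q ≤ 1 / α)
    (hσ₁ : 0 ≤ σ₁) (hσ₂ : 0 ≤ σ₂)
    (hsum : σ₁ + σ₂ = d - 2 / p - d / q)
    (hσ₁' : σ₁ < min ((d : ℝ) / 2) ((d : ℝ) / 2 - 2 / p + 1))
    (hσ₂' : σ₂ < min ((d : ℝ) / 2) ((d : ℝ) / 2 - 2 / p + 1)) :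
    ∃ p₁ q₁ p₂ q₂ α₁ α₂ : ℝ,
      1 < p₁ ∧ 1 < q₁ ∧ 1 < p₂ ∧ 1 < q₂ ∧ 1 < α₁ ∧ 1 < α₂ ∧
      2 / p₁ + d / q₁ = d - 2 * σ₁ ∧ 2 / p₂ + d / q₂ = d - 2 * σ₂ ∧
      1 / (d * p₁) + 1 / q₁ ≤ 1 / α₁ ∧ 1 / (d * p₂) + 1 / q₂ ≤ 1 / α₂ ∧
      α₁ < p₁ ∧ α₂ < p₂ ∧
      1 / α = 1 / (2 * α₁) + 1 / (2 * α₂) ∧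
      1 / p = 1 / (2 * p₁) + 1 / (2 * p₂) := by
  have hD : (1 : ℝ) ≤ d := Nat.one_le_cast.2 hd
  have hD₀ : (0 : ℝ) < d := by linarith
  obtain ⟨hb₁, hb₁'⟩ := lt_min_iff.1 hσ₁'
  obtain ⟨hb₂, hb₂'⟩ := lt_min_iff.1 hσ₂'
  have hadm' : p⁻¹ + d * q⁻¹ ≤ d * α⁻¹ := calc
    p⁻¹ + d * q⁻¹ = d * (1 / (d * p) + 1 / q) := by field_simp
    _ ≤ d * α⁻¹ := by rw [← one_div α]; gcongr
  have hsum' : σ₁ + σ₂ = d - 2 * p⁻¹ - d * q⁻¹ := by rw [hsum]; ring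
  have huw : p⁻¹ < α⁻¹ := inv_strictAnti₀ (by linarith) hαp
  have hw : α⁻¹ < 1 := inv_lt_one_of_one_lt₀ hα
  rw [div_eq_mul_inv 2 p] at hb₁' hb₂'
  obtain ⟨x₁, x₂, hx, hx₁, hx₂, hx₁', hx₂', hσx₁, hσx₂, h₁, h₂⟩ :=
    exists_reciprocal_time_split hD (inv_pos.2 (by linarith)) (huw.trans hw) huw
      (inv_pos.2 (by linarith)) hadm' hσ₁ hσ₂ hsum' hb₁ hb₁' hb₂ hb₂'
  obtain ⟨y₁, y₂, hy, hxy₁, hxy₂, hy₁, hy₂, hlow₁, hlow₂⟩ :=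
    exists_reciprocal_schatten_split hD₀ huw hw hadm' hσ₁ hσ₂ hsum'
      hx hx₁ hx₂ hx₁' hx₂' h₁ h₂
  obtain ⟨p₁, q₁, α₁, rfl, rfl, hp₁, hq₁, hα₁, hscale₁, hadm₁, hαp₁⟩ :=
    exists_exponents_of_reciprocals hD₀ hσ₁ hx₁ hxy₁ hy₁ hσx₁ hlow₁
  obtain ⟨p₂, q₂, α₂, rfl, rfl, hp₂, hq₂, hα₂, hscale₂, hadm₂, hαp₂⟩ :=
    exists_exponents_of_reciprocals hD₀ hσ₂ hx₂ hxy₂ hy₂ hσx₂ hlow₂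
  refine ⟨p₁, q₁, p₂, q₂, α₁, α₂, hp₁, hq₁, hp₂, hq₂, hα₁, hα₂, hscale₁, hscale₂, hadm₁, hadm₂,
    hαp₁, hαp₂, ?_, ?_⟩ <;> simp only [one_div, mul_inv] <;> linarith
end
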